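/- Every completely positive map Φ on M_N(ℂ) that is self-adjoint with respect to the KMS inner product can be written as Φ(A) = Σ_{j=1}^{M} V_j* A V_j with M ≤ N² and where each V_j satisfies σ^{−1/2} V_j σ^{1/2} = V_j*. -/
import Mathlib


open MeasureTheory Matrix
open scoped ComplexOrder

noncomputable section

/-- The algebra of `N × N` complex matrices. -/
abbrev Mat (N : ℕ) := Matrix (Fin N) (Fin N) ℂ

variable {N : ℕ}

/-- Real power `σ^s` of a positive definite matrix, defined via the spectral decomposition. -/
noncomputable def mpow (σ : Mat N) (hσ : σ.PosDef) (s : ℝ) : Mat N :=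
  (hσ.1.eigenvectorUnitary : Mat N) *
    Matrix.diagonal (fun i => ((hσ.1.eigenvalues i ^ s : ℝ) : ℂ)) *
    star (hσ.1.eigenvectorUnitary : Mat N)

/-- Complete positivity of a linear map on `M_N(ℂ)`: existence of a Kraus representation. -/
def IsCP (Φ : Mat N →ₗ[ℂ] Mat N) : Prop :=
  ∃ (M : ℕ) (V : Fin M → Mat N), ∀ A, Φ A = ∑ j, (V j)ᴴ * A * V j

/-- The KMS inner product `⟨B,A⟩_KMS = Tr[Bᴴ σ^{1/2} A σ^{1/2}]`. -/
def kmsInner (σ : Mat N) (hσ : σ.PosDef) (B A : Mat N) : ℂ :=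
  (Bᴴ * mpow σ hσ (1/2) * A * mpow σ hσ (1/2)).trace

/-- Self-adjointness with respect to the KMS inner product. -/
def IsKMSSelfAdjoint (σ : Mat N) (hσ : σ.PosDef) (Φ : Mat N →ₗ[ℂ] Mat N) : Prop :=
  ∀ A B, kmsInner σ hσ B (Φ A) = kmsInner σ hσ (Φ B) A

section Aux

private lemma diag_herm (σ : Mat N) (hσ : σ.PosDef) (s : ℝ) :
    (Matrix.diagonal (fun i => ((hσ.1.eigenvalues i ^ s : ℝ) : ℂ)))ᴴ
      = Matrix.diagonal (fun i => ((hσ.1.eigenvalues i ^ s : ℝ) : ℂ)) := by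
  rw [Matrix.diagonal_conjTranspose]
  have : (star fun i => ((hσ.1.eigenvalues i ^ s : ℝ) : ℂ))
      = fun i => ((hσ.1.eigenvalues i ^ s : ℝ) : ℂ) := by
    funext i
    exact Complex.conj_ofReal _
  rw [this]

lemma mpow_herm (σ : Mat N) (hσ : σ.PosDef) (s : ℝ) : (mpow σ hσ s)ᴴ = mpow σ hσ s := by
  unfold mpow
  rw [conjTranspose_mul, conjTranspose_mul, diag_herm _ hσ]
  rw [← star_eq_conjTranspose, star_star, ← star_eq_conjTranspose, mul_assoc]

lemma mpow_mul_mpow (σ : Mat N) (hσ : σ.PosDef) (a b : ℝ) :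
    mpow σ hσ a * mpow σ hσ b = mpow σ hσ (a + b) := by
  unfold mpow
  set U := (hσ.1.eigenvectorUnitary : Mat N)
  have hu : star U * U = 1 := Matrix.mem_unitaryGroup_iff'.mp (hσ.1.eigenvectorUnitary).2
  set Da := Matrix.diagonal (fun i => ((hσ.1.eigenvalues i ^ a : ℝ) : ℂ))
  set Db := Matrix.diagonal (fun i => ((hσ.1.eigenvalues i ^ b : ℝ) : ℂ))
  have h1 : (U * Da * star U) * (U * Db * star U) = U * (Da * Db) * star U := by
    calc (U * Da * star U) * (U * Db * star U)
        = U * (Da * ((star U * U) * (Db * star U))) := by simp only [mul_assoc]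
      _ = U * (Da * Db) * star U := by rw [hu, one_mul]; simp only [mul_assoc]
  have hd : (fun i => ((hσ.1.eigenvalues i ^ a : ℝ) : ℂ) * ((hσ.1.eigenvalues i ^ b : ℝ) : ℂ))
      = fun i => ((hσ.1.eigenvalues i ^ (a + b) : ℝ) : ℂ) := by
    funext i
    rw [← Complex.ofReal_mul, ← Real.rpow_add (hσ.eigenvalues_pos i)]
  rw [h1, Matrix.diagonal_mul_diagonal, hd]

lemma mpow_zero (σ : Mat N) (hσ : σ.PosDef) : mpow σ hσ 0 = 1 := by
  unfold mpow
  have hu : (hσ.1.eigenvectorUnitary : Mat N) * star (hσ.1.eigenvectorUnitary : Mat N) = 1 :=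
    Matrix.mem_unitaryGroup_iff.mp (hσ.1.eigenvectorUnitary).2
  simpa [Real.rpow_zero, Matrix.diagonal_one] using hu

lemma tr_herm_zero {X : Mat N} (h : (Xᴴ * X).trace = 0) : X = 0 := by
  have h2 : ∑ j, ∑ i, Complex.normSq (X i j) = 0 := by
    have : (Xᴴ * X).trace = ((∑ j, ∑ i, Complex.normSq (X i j) : ℝ) : ℂ) := by
      simp [Matrix.trace, Matrix.mul_apply, Matrix.diag, Matrix.conjTranspose_apply,
        Complex.normSq_eq_conj_mul_self]
    rw [this] at h
    exact_mod_cast h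
  ext i j
  have := (Finset.sum_eq_zero_iff_of_nonneg
    (by intro a _; exact Finset.sum_nonneg fun _ _ => Complex.normSq_nonneg _)).mp h2 j
    (Finset.mem_univ j)
  have := (Finset.sum_eq_zero_iff_of_nonneg
    (by intro a _; exact Complex.normSq_nonneg _)).mp this i (Finset.mem_univ i)
  simpa using Complex.normSq_eq_zero.mp this

lemma herm_reduce {ι : Type} [Fintype ι] [DecidableEq ι] (H : ι → Mat N)
    (hH : ∀ j, (H j)ᴴ = H j) :
    ∃ (M : ℕ) (K : Fin M → Mat N), M ≤ N ^ 2 ∧ (∀ l, (K l)ᴴ = K l) ∧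
      ∀ A, ∑ l, K l * A * K l = ∑ j, H j * A * H j := by
  classical
  -- the real Gram matrix
  set G : Matrix ι ι ℝ := Matrix.of (fun j k => ((H j * H k).trace).re) with hGdef
  have hGC : ∀ j k, ((G j k : ℝ) : ℂ) = (H j * H k).trace := by
    intro j k
    have hre : (starRingEnd ℂ) ((H j * H k).trace) = (H j * H k).trace := by
      have : ((H j * H k)ᴴ).trace = star ((H j * H k).trace) := Matrix.trace_conjTranspose _
      rw [Matrix.conjTranspose_mul, hH j, hH k, Matrix.trace_mul_comm] at this
      exact this.symm
    exact Complex.conj_eq_iff_re.mp hre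
  have hG : G.IsHermitian := by
    ext j k
    simp only [Matrix.conjTranspose_apply, star_trivial]
    have : (H k * H j).trace = (H j * H k).trace := Matrix.trace_mul_comm _ _
    simp only [hGdef, Matrix.of_apply]
    rw [this]
  set u : Matrix ι ι ℝ := (hG.eigenvectorUnitary : Matrix ι ι ℝ) with hudef
  set d : ι → ℝ := hG.eigenvalues with hddef
  have hu1 : star u * u = 1 := Matrix.mem_unitaryGroup_iff'.mp (hG.eigenvectorUnitary).2
  have hu2 : u * star u = 1 := Matrix.mem_unitaryGroup_iff.mp (hG.eigenvectorUnitary).2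
  have hspec : star u * G * u = Matrix.diagonal d := by
    have h : G = u * Matrix.diagonal d * star u := by
      have h0 := hG.spectral_theorem
      rwa [show (RCLike.ofReal ∘ hG.eigenvalues : ι → ℝ) = hG.eigenvalues from
        funext fun i => rfl] at h0
    calc star u * G * u
        = star u * (u * Matrix.diagonal d * star u) * u := by rw [← h]
      _ = (star u * u) * Matrix.diagonal d * (star u * u) := by simp only [mul_assoc]
      _ = Matrix.diagonal d := by rw [hu1, one_mul, mul_one]
  set c : ι → ι → ℂ := fun j l => ((u j l : ℝ) : ℂ) with hcdef
  set K' : ι → Mat N := fun l => ∑ j, c j l • H j with hK'def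
  have hK'herm : ∀ l, (K' l)ᴴ = K' l := by
    intro l
    simp only [hK'def, Matrix.conjTranspose_sum, Matrix.conjTranspose_smul, hH, hcdef,
      Complex.star_def, Complex.conj_ofReal]
  -- expansion of K' l * A * K' l
  have hexp : ∀ (A : Mat N) l,
      K' l * A * K' l = ∑ k, ∑ j, (c k l * c j l) • (H j * A * H k) := by
    intro A l
    simp only [hK'def, Finset.sum_mul, Finset.mul_sum, Matrix.smul_mul, Matrix.mul_smul,
      smul_smul]
  have hortho : ∀ j k, (∑ l, c j l * c k l) = if j = k then (1 : ℂ) else 0 := by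
    intro j k
    have : (u * star u) j k = if j = k then (1:ℝ) else 0 := by
      rw [hu2]
      simp [Matrix.one_apply]
    have h2 : ∑ l, u j l * u k l = if j = k then (1:ℝ) else 0 := by
      rw [← this, Matrix.mul_apply]
      simp [Matrix.star_apply]
    calc (∑ l, c j l * c k l) = ((∑ l, u j l * u k l : ℝ) : ℂ) := by push_cast [hcdef]; ring_nf
      _ = _ := by rw [h2]; split <;> simp
  have hsum : ∀ A, ∑ l, K' l * A * K' l = ∑ j, H j * A * H j := by
    intro A
    rw [Finset.sum_congr rfl (fun l _ => hexp A l)]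
    rw [Finset.sum_comm]
    have hkk : ∀ k, ∑ l, ∑ j, (c k l * c j l) • (H j * A * H k) = H k * A * H k := by
      intro k
      rw [Finset.sum_comm]
      have h1 : ∀ j, ∑ l, (c k l * c j l) • (H j * A * H k)
          = (if k = j then (1:ℂ) else 0) • (H j * A * H k) := by
        intro j
        rw [← Finset.sum_smul, hortho]
      rw [Finset.sum_congr rfl (fun j _ => h1 j)]
      simp
    exact Finset.sum_congr rfl (fun k _ => hkk k)
  -- trace orthogonality
  have htrK : ∀ l l', (K' l * K' l').trace = if l = l' then ((d l : ℝ) : ℂ) else 0 := by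
    intro l l'
    have hexp2 : (K' l * K' l').trace = ∑ k, ∑ j, c k l' * c j l * (H j * H k).trace := by
      simp only [hK'def, Finset.sum_mul, Finset.mul_sum, Matrix.smul_mul, Matrix.mul_smul,
        smul_smul, Matrix.trace_sum, Matrix.trace_smul]
      simp [smul_eq_mul]
    have hent : (star u * G * u) l l' = ∑ j, ∑ k, u j l * G j k * u k l' := by
      rw [Matrix.mul_apply]
      conv_rhs => rw [Finset.sum_comm]
      refine Finset.sum_congr rfl fun k _ => ?_
      rw [Matrix.mul_apply, Finset.sum_mul]
      refine Finset.sum_congr rfl fun j _ => ?_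
      simp [Matrix.star_apply]
    have hdd : (Matrix.diagonal d) l l' = if l = l' then d l else 0 := by
      simp [Matrix.diagonal_apply]
    rw [hexp2]
    have : ∑ k, ∑ j, c k l' * c j l * (H j * H k).trace
        = ((∑ j, ∑ k, u j l * G j k * u k l' : ℝ) : ℂ) := by
      conv_lhs => rw [Finset.sum_comm]
      push_cast
      refine Finset.sum_congr rfl fun j _ => Finset.sum_congr rfl fun k _ => ?_
      rw [← hGC j k]
      push_cast
      ring
    rw [this, ← hent, hspec, hdd]
    split <;> simp
  have hzero : ∀ l, d l = 0 → K' l = 0 := by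
    intro l hl
    apply tr_herm_zero (X := K' l)
    rw [hK'herm l, htrK l l]
    simp [hl]
  -- the nonzero part
  set S : Finset ι := Finset.univ.filter (fun l => K' l ≠ 0) with hSdef
  have hdne : ∀ l : S, ((d l : ℝ) : ℂ) ≠ 0 := by
    intro ⟨l, hl⟩
    simp only [hSdef, Finset.mem_filter] at hl
    intro h0
    exact hl.2 (hzero l (by exact_mod_cast h0))
  have hind : LinearIndependent ℂ (fun l : S => K' l) := by
    rw [Fintype.linearIndependent_iff]
    intro g hg l0
    have htr0 : (K' (l0 : ι) * (∑ l : S, g l • K' (l : ι))).trace = 0 := by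
      rw [hg]
      simp
    rw [Finset.mul_sum] at htr0
    simp only [Matrix.mul_smul, Matrix.trace_sum, Matrix.trace_smul, smul_eq_mul] at htr0
    have : ∀ l : S, g l * (K' (l0 : ι) * K' (l : ι)).trace
        = if l = l0 then g l0 * ((d (l0 : ι) : ℝ) : ℂ) else 0 := by
      intro l
      rw [htrK]
      by_cases h : l = l0
      · subst h
        simp
      · have : (l0 : ι) ≠ (l : ι) := fun hh => h (Subtype.ext hh.symm)
        rw [if_neg this, if_neg h, mul_zero]
    rw [Finset.sum_congr rfl (fun l _ => this l)] at htr0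
    rw [Finset.sum_ite_eq' Finset.univ l0 (fun _ => g l0 * ((d (l0 : ι) : ℝ) : ℂ))] at htr0
    simp only [Finset.mem_univ, if_true] at htr0
    exact (mul_eq_zero.mp htr0).resolve_right (hdne l0)
  have hcard : Fintype.card S ≤ N ^ 2 := by
    have h1 := hind.fintype_card_le_finrank
    have h2 : Module.finrank ℂ (Mat N) = N ^ 2 := by
      rw [Module.finrank_matrix]
      simp [sq]
    omega
  refine ⟨Fintype.card S, fun i => K' ((Fintype.equivFin S).symm i : ι), hcard, ?_, ?_⟩
  · intro l; exact hK'herm _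
  · intro A
    have he : ∑ i : Fin (Fintype.card S),
        K' (((Fintype.equivFin S).symm i : S) : ι) * A * K' (((Fintype.equivFin S).symm i : S) : ι)
        = ∑ l : S, K' (l : ι) * A * K' (l : ι) :=
      Fintype.sum_equiv (Fintype.equivFin S).symm _ _ (fun i => rfl)
    rw [he, Finset.sum_coe_sort S (fun l => K' l * A * K' l)]
    rw [hSdef]
    rw [Finset.sum_filter_of_ne]
    · exact hsum A
    · intro x _ hx h0
      apply hx
      rw [h0]
      simp

end Aux

/-- Every CP map on `M_N(ℂ)` that is self-adjoint with respect to the KMS inner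
product has a Kraus representation `Φ(A) = Σ_{j=1}^M Vⱼᴴ A Vⱼ` with `M ≤ N²` and each `Vⱼ`
satisfying `σ^{-1/2} Vⱼ σ^{1/2} = Vⱼᴴ`. -/
theorem kms_selfAdjoint_CP_kraus (N : ℕ) (hN : 2 ≤ N) (σ : Mat N) (hσ : σ.PosDef)
    (htr : σ.trace = 1) (Φ : Mat N →ₗ[ℂ] Mat N)
    (hΦcp : IsCP Φ) (hΦsa : IsKMSSelfAdjoint σ hσ Φ) :
    ∃ (M : ℕ) (V : Fin M → Mat N), M ≤ N ^ 2 ∧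
      (∀ j, mpow σ hσ (-(1/2)) * V j * mpow σ hσ (1/2) = (V j)ᴴ) ∧
      ∀ A, Φ A = ∑ j, (V j)ᴴ * A * V j := by
  obtain ⟨m, V, hV⟩ := hΦcp
  set s : Mat N := mpow σ hσ (1/2) with hsdef
  set s' : Mat N := mpow σ hσ (-(1/2)) with hs'def
  have hs : sᴴ = s := mpow_herm σ hσ _
  have hs' : s'ᴴ = s' := mpow_herm σ hσ _
  have h1 : s' * s = 1 := by
    rw [hs'def, hsdef, mpow_mul_mpow, show -(1/2 : ℝ) + 1/2 = 0 by ring, mpow_zero]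
  have h2 : s * s' = 1 := by
    rw [hs'def, hsdef, mpow_mul_mpow, show (1/2 : ℝ) + -(1/2) = 0 by ring, mpow_zero]
  set U : Fin m → Mat N := fun j => V j * s with hUdef
  -- Σ Uᴴ A U = s Φ(A) s
  have hPhi : ∀ A, ∑ j, (U j)ᴴ * A * U j = s * Φ A * s := by
    intro A
    rw [hV A, Finset.mul_sum, Finset.sum_mul]
    refine Finset.sum_congr rfl fun j _ => ?_
    rw [hUdef]
    rw [Matrix.conjTranspose_mul, hs]
    simp only [mul_assoc]
  -- the KMS symmetry in Kraus form
  have key : ∀ A, ∑ j, (U j)ᴴ * A * U j = ∑ j, U j * A * (U j)ᴴ := by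
    intro A
    have htr0 : ∀ B : Mat N,
        (Bᴴ * ((∑ j, (U j)ᴴ * A * U j) - ∑ j, U j * A * (U j)ᴴ)).trace = 0 := by
      intro B
      have h := hΦsa A B
      unfold kmsInner at h
      rw [hV A, hV B] at h
      have hmidL : mpow σ hσ (1/2) * (∑ j, (V j)ᴴ * A * V j) * mpow σ hσ (1/2)
          = ∑ j, (U j)ᴴ * A * U j := by
        rw [← hsdef, Finset.mul_sum, Finset.sum_mul]
        refine Finset.sum_congr rfl fun j _ => ?_
        rw [hUdef, Matrix.conjTranspose_mul, hs]
        simp only [mul_assoc]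
      have hL : (Bᴴ * mpow σ hσ (1/2) * (∑ j, (V j)ᴴ * A * V j) * mpow σ hσ (1/2)).trace
          = (Bᴴ * ∑ j, (U j)ᴴ * A * U j).trace := by
        rw [show Bᴴ * mpow σ hσ (1/2) * (∑ j, (V j)ᴴ * A * V j) * mpow σ hσ (1/2)
            = Bᴴ * (mpow σ hσ (1/2) * (∑ j, (V j)ᴴ * A * V j) * mpow σ hσ (1/2)) by
          simp only [mul_assoc], hmidL]
      have hR : ((∑ j, (V j)ᴴ * B * V j)ᴴ * mpow σ hσ (1/2) * A * mpow σ hσ (1/2)).trace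
          = (Bᴴ * ∑ j, U j * A * (U j)ᴴ).trace := by
        rw [Matrix.conjTranspose_sum]
        simp only [Matrix.conjTranspose_mul, Matrix.conjTranspose_conjTranspose]
        rw [Finset.sum_mul, Finset.sum_mul, Finset.sum_mul, Matrix.trace_sum,
          Finset.mul_sum, Matrix.trace_sum]
        refine Finset.sum_congr rfl fun j _ => ?_
        rw [show (V j)ᴴ * (Bᴴ * V j) * mpow σ hσ (1/2) * A * mpow σ hσ (1/2)
            = (V j)ᴴ * (Bᴴ * (V j * mpow σ hσ (1/2) * A * mpow σ hσ (1/2))) by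
          simp only [mul_assoc]]
        rw [Matrix.trace_mul_comm]
        congr 1
        rw [hUdef, Matrix.conjTranspose_mul, hs, ← hsdef]
        simp only [mul_assoc]
      rw [hL, hR] at h
      rw [Matrix.mul_sub, Matrix.trace_sub, h, sub_self]
    have hD := htr0 ((∑ j, (U j)ᴴ * A * U j) - ∑ j, U j * A * (U j)ᴴ)
    have := tr_herm_zero hD
    exact sub_eq_zero.mp this
  -- hermitian Kraus operators for s Φ(·) s
  set P : Fin m → Mat N := fun j => (1/2 : ℂ) • (U j + (U j)ᴴ) with hPdef
  set Q : Fin m → Mat N := fun j => (-(Complex.I)/2) • (U j - (U j)ᴴ) with hQdef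
  have hPh : ∀ j, (P j)ᴴ = P j := by
    intro j
    rw [hPdef]
    simp only [Matrix.conjTranspose_smul, Matrix.conjTranspose_add,
      Matrix.conjTranspose_conjTranspose]
    rw [add_comm]
    congr 1
    simp [Complex.star_def]
  have hQh : ∀ j, (Q j)ᴴ = Q j := by
    intro j
    rw [hQdef]
    simp only [Matrix.conjTranspose_smul, Matrix.conjTranspose_sub,
      Matrix.conjTranspose_conjTranspose]
    have h3 : (star (-(Complex.I)/2) : ℂ) = Complex.I/2 := by
      simp [Complex.star_def]
    rw [h3, show ((U j)ᴴ - U j : Mat N) = -(U j - (U j)ᴴ) by abel]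
    rw [smul_neg, ← neg_smul]
    congr 1
    ring
  have hiden : ∀ j A, P j * A * P j + Q j * A * Q j
      = (1/2 : ℂ) • ((U j)ᴴ * A * U j + U j * A * (U j)ᴴ) := by
    intro j A
    rw [hPdef, hQdef]
    simp only [Matrix.smul_mul, Matrix.mul_smul, smul_smul, Matrix.add_mul, Matrix.mul_add,
      Matrix.sub_mul, Matrix.mul_sub, smul_add, smul_sub]
    simp only [show (-Complex.I/2) * (-Complex.I/2) = (-(1/4) : ℂ) from by
      rw [div_mul_div_comm, neg_mul_neg, Complex.I_mul_I]; norm_num]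
    module
  have hHsum : ∀ A, ∑ x : Fin m ⊕ Fin m, (Sum.elim P Q) x * A * (Sum.elim P Q) x
      = s * Φ A * s := by
    intro A
    rw [Fintype.sum_sum_type]
    simp only [Sum.elim_inl, Sum.elim_inr]
    rw [← Finset.sum_add_distrib]
    rw [Finset.sum_congr rfl (fun j _ => hiden j A)]
    rw [← Finset.smul_sum, Finset.sum_add_distrib, ← key A]
    rw [← hPhi A]
    rw [show (∑ j, (U j)ᴴ * A * U j) + (∑ j, (U j)ᴴ * A * U j)
        = (2 : ℂ) • ∑ j, (U j)ᴴ * A * U j by rw [two_smul]]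
    rw [smul_smul]
    norm_num
  obtain ⟨M, K, hM, hKh, hKsum⟩ := herm_reduce (Sum.elim P Q)
    (by intro x; cases x with
        | inl j => exact hPh j
        | inr j => exact hQh j)
  refine ⟨M, fun l => K l * s', hM, ?_, ?_⟩
  · intro l
    rw [Matrix.conjTranspose_mul, hs']
    calc mpow σ hσ (-(1/2)) * (K l * s') * mpow σ hσ (1/2)
        = s' * K l * (s' * s) := by rw [← hsdef, ← hs'def]; simp only [mul_assoc]
      _ = s' * K l := by rw [h1, mul_one]
      _ = s' * (K l)ᴴ := by rw [hKh]
  · intro A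
    have hterm : ∑ l, (K l * s')ᴴ * A * (K l * s') = s' * (∑ l, K l * A * K l) * s' := by
      rw [Finset.mul_sum, Finset.sum_mul]
      refine Finset.sum_congr rfl fun l _ => ?_
      rw [Matrix.conjTranspose_mul, hs', hKh]
      simp only [mul_assoc]
    rw [hterm, hKsum A, hHsum A]
    calc Φ A = (s' * s) * Φ A * (s * s') := by rw [h1, h2, one_mul, mul_one]
      _ = s' * (s * Φ A * s) * s' := by simp only [mul_assoc]
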